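/- Let c₀ be a nonnegative integer and let φ(s) = ∑_{n≥1} c_n n^{-s} be a Dirichlet series converging uniformly on ℂ_ε for every ε > 0; set Φ(s) = c₀ s + φ(s) and assume: if c₀ ≥ 1 then Re φ(s) ≥ 0 for all s ∈ ℂ₊, and if c₀ = 0 then Φ(ℂ₊) ⊆ ℂ_{1/2}. If Φ is not a vertical translation (i.e., there is no τ ∈ ℝ with Φ(s) = s + iτ for all s ∈ ℂ₊), then there exist ε > 0 and η > 0 such that Φ(ℂ_{1/2−ε}) ⊆ ℂ_{1/2+η}. -/

import Mathlib

/-!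
Since `Re Φ ≥ c₀ Re s`, only `c₀ ∈ {0, 1}` needs work; then `Re φ ≥ a` on `ℂ₊`, with `a = 1/2`
or `a = 0`. The coefficients grow at most polynomially, so `φ(s) → c 0` uniformly as
`Re s → ∞`, with error `O((k+2)^{-Re s})` after the first non-vanishing term
`c k (k+1)^{-s}`. Turning `Im s` so that this term is negative real shows `a < Re (c 0)` unless
`φ` is constant; a constant with `Re (c 0) = a` violates `Re Φ > 1/2` when `c₀ = 0` and
makes `Φ` a vertical translation when `c₀ = 1`.
Hence `Re φ` exceeds `a` by a fixed margin on a far right half-plane, and Hadamard's three lines theorem for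
`exp (a - φ)` on the strip between `Re s = 1/8` and that half-plane carries a uniform gain
`Re φ ≥ a + δ` down to `Re s = 1/4`.
-/

open Filter Topology Complex

/-- Index `n` carries the frequency `n + 1`, so `c 0` is the constant term. -/
noncomputable def dirichletPartialSum (c : ℕ → ℂ) (N : ℕ) (s : ℂ) : ℂ :=
  ∑ n ∈ Finset.range N, c n * ((n : ℂ) + 1) ^ (-s)

lemma norm_natCast_add_one_cpow_neg (n : ℕ) (s : ℂ) :
    ‖((n : ℂ) + 1) ^ (-s)‖ = ((n : ℝ) + 1) ^ (-s.re) := by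
  have := norm_natCast_cpow_of_pos n.succ_pos (-s)
  push_cast at this
  rwa [neg_re] at this

lemma eventually_mul_rpow_neg_lt {x y : ℝ} (hx : 0 < x) (hxy : x < y) (K : ℝ) {b : ℝ}
    (hb : 0 < b) : ∀ᶠ σ : ℝ in atTop, K * y ^ (-σ) < b * x ^ (-σ) := by
  have hy : 0 < y := hx.trans hxy
  have hratio : Tendsto (fun σ : ℝ => K * (x / y) ^ σ) atTop (𝓝 0) := by
    simpa using (tendsto_rpow_atTop_of_base_lt_one (x / y) (by linarith [div_pos hx hy])
      ((div_lt_one hy).2 hxy)).const_mul K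
  filter_upwards [hratio.eventually_lt_const hb] with σ hσ
  have hsplit : K * y ^ (-σ) = K * (x / y) ^ σ * x ^ (-σ) := by
    rw [Real.div_rpow hx.le hy.le, Real.rpow_neg hx.le, Real.rpow_neg hy.le]
    field_simp
  rw [hsplit]
  exact mul_lt_mul_of_pos_right hσ (by positivity)

lemma exists_re_mul_cpow_eq_neg_norm {x : ℝ} (hx : 1 < x) (w : ℂ) (σ : ℝ) :
    ∃ t : ℝ, (w * (x : ℂ) ^ (-((σ : ℂ) + t * I))).re = -(‖w‖ * x ^ (-σ)) := by
  have hx0 : 0 < x := by linarith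
  have hlog : (Real.log x : ℂ) ≠ 0 := by exact_mod_cast (Real.log_pos hx).ne'
  refine ⟨(arg w - Real.pi) / Real.log x, ?_⟩
  have hexponent : (arg w : ℂ) * I
      + Real.log x * -((σ : ℂ) + ((arg w - Real.pi) / Real.log x : ℝ) * I)
      = (Real.log x * -σ : ℝ) + Real.pi * I := by
    push_cast
    field_simp
    ring
  rw [cpow_def_of_ne_zero (by exact_mod_cast hx0.ne'), ← ofReal_log hx0.le,
    Real.rpow_def_of_pos hx0]
  nth_rewrite 1 [← norm_mul_exp_arg_mul_I w]
  rw [mul_assoc, ← exp_add, hexponent, exp_add, exp_pi_mul_I, ← ofReal_exp]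
  simp only [mul_neg, mul_one, neg_re, re_ofReal_mul, ofReal_re]

open HadamardThreeLines in
/-- Hadamard's three lines theorem for `exp (a - f)`. -/
lemma le_re_of_mem_verticalClosedStrip {f : ℂ → ℂ} {l u a θ : ℝ} (hlu : l < u)
    (hf : DiffContOnCl ℂ f (verticalStrip l u))
    (hstrip : ∀ z ∈ verticalClosedStrip l u, a ≤ (f z).re)
    (hright : ∀ z : ℂ, z.re = u → a + θ ≤ (f z).re)
    {z : ℂ} (hz : z ∈ verticalClosedStrip l u) :
    a + θ * ((z.re - l) / (u - l)) ≤ (f z).re := by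
  set g : ℂ → ℂ := fun z => exp (a - f z)
  have hg : ∀ z, ‖g z‖ = Real.exp (a - (f z).re) := by simp [g, norm_exp]
  have hg1 : ∀ z ∈ verticalClosedStrip l u, ‖g z‖ ≤ 1 := fun z hz => by
    rw [hg, Real.exp_le_one_iff]
    linarith [hstrip z hz]
  have hinterp := norm_le_interp_of_mem_verticalClosedStrip' hlu hz
    (differentiable_exp.comp_diffContOnCl (hf.const_sub a))
    ⟨1, by rintro _ ⟨w, hw, rfl⟩; exact hg1 w hw⟩
    (fun w (hw : w.re = l) => hg1 w ⟨hw.ge, hw ▸ hlu.le⟩)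
    (fun w (hw : w.re = u) => show ‖g w‖ ≤ Real.exp (-θ) by
      rw [hg, Real.exp_le_exp]
      linarith [hright w hw])
  rw [Real.one_rpow, one_mul, ← Real.exp_mul] at hinterp
  change ‖g z‖ ≤ _ at hinterp
  rw [hg, Real.exp_le_exp] at hinterp
  linarith

section Coefficients

variable {c : ℕ → ℂ}

lemma exists_norm_coeff_le_of_tendsto {s₀ L : ℂ}
    (h : Tendsto (fun N => dirichletPartialSum c N s₀) atTop (𝓝 L)) :
    ∃ C, 0 ≤ C ∧ ∀ n, ‖c n‖ ≤ C * ((n : ℝ) + 1) ^ s₀.re := by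
  have hterm : Tendsto (fun n => ‖c n‖ * ((n : ℝ) + 1) ^ (-s₀.re)) atTop (𝓝 0) := by
    have := ((h.comp (tendsto_add_atTop_nat 1)).sub h).norm
    simpa [Function.comp_def, dirichletPartialSum, Finset.sum_range_succ,
      norm_natCast_add_one_cpow_neg] using this
  obtain ⟨C, hC⟩ := hterm.bddAbove_range
  refine ⟨max C 0, le_max_right _ _, fun n => ?_⟩
  have hpos : (0 : ℝ) < (n : ℝ) + 1 := by positivity
  have hn := (hC (Set.mem_range_self n)).trans (le_max_left C 0)
  rwa [Real.rpow_neg hpos.le, ← div_eq_mul_inv, div_le_iff₀ (by positivity)] at hn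

lemma norm_term_le {C : ℝ} (hC0 : 0 ≤ C) (hC : ∀ n, ‖c n‖ ≤ C * ((n : ℝ) + 1) ^ (1 : ℝ))
    {m n : ℕ} (hmn : m ≤ n) {s : ℂ} (hs : 3 ≤ s.re) :
    ‖c n * ((n : ℂ) + 1) ^ (-s)‖
      ≤ C * ((m : ℝ) + 1) ^ (3 - s.re) * ((n : ℝ) + 1) ^ (-2 : ℝ) := by
  have hn : (0 : ℝ) < (n : ℝ) + 1 := by positivity
  have hsplit : ((n : ℝ) + 1) ^ (1 : ℝ) * ((n : ℝ) + 1) ^ (-s.re)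
      = ((n : ℝ) + 1) ^ (3 - s.re) * ((n : ℝ) + 1) ^ (-2 : ℝ) := by
    rw [← Real.rpow_add hn, ← Real.rpow_add hn]
    ring_nf
  have hdecay : ((n : ℝ) + 1) ^ (3 - s.re) ≤ ((m : ℝ) + 1) ^ (3 - s.re) :=
    Real.rpow_le_rpow_of_nonpos (by positivity) (by exact_mod_cast Nat.succ_le_succ hmn)
      (by linarith)
  calc ‖c n * ((n : ℂ) + 1) ^ (-s)‖ = ‖c n‖ * ((n : ℝ) + 1) ^ (-s.re) := by
        rw [norm_mul, norm_natCast_add_one_cpow_neg]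
    _ ≤ C * ((n : ℝ) + 1) ^ (1 : ℝ) * ((n : ℝ) + 1) ^ (-s.re) := by gcongr; exact hC n
    _ = C * ((n : ℝ) + 1) ^ (3 - s.re) * ((n : ℝ) + 1) ^ (-2 : ℝ) := by
        rw [mul_assoc, hsplit]; ring
    _ ≤ C * ((m : ℝ) + 1) ^ (3 - s.re) * ((n : ℝ) + 1) ^ (-2 : ℝ) := by gcongr

end Coefficients

section PointwiseConvergence

variable {c : ℕ → ℂ} {φ : ℂ → ℂ}
  (hconv : ∀ s : ℂ, 0 < s.re → Tendsto (fun N => dirichletPartialSum c N s) atTop (𝓝 (φ s)))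
include hconv

lemma exists_norm_sub_dirichletPartialSum_le (m : ℕ) :
    ∃ K, ∀ s : ℂ, 3 ≤ s.re →
      ‖φ s - dirichletPartialSum c m s‖ ≤ K * ((m : ℝ) + 1) ^ (-s.re) := by
  obtain ⟨C, hC0, hC⟩ := exists_norm_coeff_le_of_tendsto (hconv 1 one_pos)
  have hsummable : Summable fun n : ℕ => ((n : ℝ) + 1) ^ (-2 : ℝ) := by
    have := (summable_nat_add_iff 1).2 (Real.summable_nat_rpow.2 (by norm_num : (-2 : ℝ) < -1))
    simpa using this
  set S := ∑' n : ℕ, ((n : ℝ) + 1) ^ (-2 : ℝ)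
  refine ⟨C * ((m : ℝ) + 1) ^ (3 : ℝ) * S, fun s hs => ?_⟩
  have hm : (0 : ℝ) < (m : ℝ) + 1 := by positivity
  have hfinite : ∀ N ≥ m, ‖dirichletPartialSum c N s - dirichletPartialSum c m s‖
      ≤ C * ((m : ℝ) + 1) ^ (3 : ℝ) * S * ((m : ℝ) + 1) ^ (-s.re) := by
    intro N hN
    rw [dirichletPartialSum, dirichletPartialSum, ← Finset.sum_Ico_eq_sub _ hN]
    calc _ ≤ ∑ n ∈ Finset.Ico m N, C * ((m : ℝ) + 1) ^ (3 - s.re) * ((n : ℝ) + 1) ^ (-2 : ℝ) :=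
          norm_sum_le_of_le _ fun n hn =>
            norm_term_le hC0 (by simpa using hC) (Finset.mem_Ico.1 hn).1 hs
      _ = C * ((m : ℝ) + 1) ^ (3 - s.re) * ∑ n ∈ Finset.Ico m N, ((n : ℝ) + 1) ^ (-2 : ℝ) := by
          rw [Finset.mul_sum]
      _ ≤ C * ((m : ℝ) + 1) ^ (3 - s.re) * S := by
          gcongr
          exact hsummable.sum_le_tsum _ fun n _ => by positivity
      _ = C * ((m : ℝ) + 1) ^ (3 : ℝ) * S * ((m : ℝ) + 1) ^ (-s.re) := by
          rw [sub_eq_add_neg, Real.rpow_add hm]; ring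
  exact le_of_tendsto (((hconv s (by linarith)).sub tendsto_const_nhds).norm)
    (eventually_atTop.2 ⟨m, hfinite⟩)

lemma exists_norm_sub_const_lt {ε : ℝ} (hε : 0 < ε) :
    ∃ σ₀, ∀ s : ℂ, σ₀ ≤ s.re → ‖φ s - c 0‖ < ε := by
  obtain ⟨K, hK⟩ := exists_norm_sub_dirichletPartialSum_le hconv 1
  obtain ⟨σ₀, hσ₀⟩ := eventually_atTop.1
    ((eventually_mul_rpow_neg_lt one_pos one_lt_two K hε).and (eventually_ge_atTop 3))
  refine ⟨σ₀, fun s hs => ?_⟩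
  obtain ⟨hlt, h3⟩ := hσ₀ s.re hs
  have htail := hK s h3
  norm_num [dirichletPartialSum] at htail hlt
  linarith

lemma eq_const_of_coeff_eq_zero (h : ∀ n ≠ 0, c n = 0) {s : ℂ} (hs : 0 < s.re) : φ s = c 0 := by
  refine tendsto_nhds_unique (hconv s hs) (tendsto_const_nhds.congr' ?_)
  filter_upwards [eventually_ge_atTop 1] with N hN
  rw [dirichletPartialSum, Finset.sum_eq_single_of_mem 0 (Finset.mem_range.2 hN)
    fun n _ hn => by simp [h n hn]]
  simp

lemma re_const_gt_of_le_re {a : ℝ} (hge : ∀ s : ℂ, 0 < s.re → a ≤ (φ s).re)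
    (hc : ∃ n ≠ 0, c n ≠ 0) : a < (c 0).re := by
  classical
  obtain ⟨hk0, hck⟩ := Nat.find_spec hc
  set k := Nat.find hc
  have hhead (s : ℂ) : dirichletPartialSum c (k + 1) s = c 0 + c k * ((k : ℂ) + 1) ^ (-s) := by
    rw [dirichletPartialSum, Finset.sum_range_succ, Finset.sum_eq_single_of_mem 0
      (Finset.mem_range.2 (Nat.pos_of_ne_zero hk0)) fun n hn hn0 => ?_]
    · simp
    · rw [show c n = 0 by simpa [hn0] using Nat.find_min hc (Finset.mem_range.1 hn), zero_mul]
  obtain ⟨K, hK⟩ := exists_norm_sub_dirichletPartialSum_le hconv (k + 1)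
  have hk1 : (1 : ℝ) < k + 1 := by
    have : (1 : ℝ) ≤ k := by exact_mod_cast Nat.one_le_iff_ne_zero.2 hk0
    linarith
  obtain ⟨σ, hσ, hσ3⟩ := ((eventually_mul_rpow_neg_lt (y := ((k + 1 : ℕ) : ℝ) + 1)
    (by positivity) (by push_cast; linarith) K (norm_pos_iff.2 hck)).and
    (eventually_ge_atTop 3)).exists
  -- Turn `Im s` so that the first non-constant term points in the negative direction.
  obtain ⟨t, ht⟩ := exists_re_mul_cpow_eq_neg_norm hk1 (c k) σ
  set s : ℂ := σ + t * I
  have hsre : s.re = σ := by simp [s]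
  have htail := hK s (hsre ▸ hσ3)
  rw [hhead, hsre] at htail
  have hrot : (c k * ((k : ℂ) + 1) ^ (-s)).re = -(‖c k‖ * ((k : ℝ) + 1) ^ (-σ)) := by
    simpa using ht
  calc a ≤ (φ s).re := hge s (by rw [hsre]; linarith)
    _ = (c 0).re + (c k * ((k : ℂ) + 1) ^ (-s)).re
          + (φ s - (c 0 + c k * ((k : ℂ) + 1) ^ (-s))).re := by simp only [sub_re, add_re]; ring
    _ ≤ (c 0).re - ‖c k‖ * ((k : ℝ) + 1) ^ (-σ) + K * (((k + 1 : ℕ) : ℝ) + 1) ^ (-σ) := by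
          linarith [(re_le_norm _).trans htail]
    _ < (c 0).re := by linarith

lemma re_const_gt_or_eq_const {a : ℝ} (hge : ∀ s : ℂ, 0 < s.re → a ≤ (φ s).re) :
    a < (c 0).re ∨ ∀ s : ℂ, 0 < s.re → φ s = c 0 := by
  by_cases h : ∃ n ≠ 0, c n ≠ 0
  · exact .inl (re_const_gt_of_le_re hconv hge h)
  · push Not at h
    exact .inr fun s hs => eq_const_of_coeff_eq_zero hconv h hs

end PointwiseConvergence

section UniformConvergence

variable {c : ℕ → ℂ} {φ : ℂ → ℂ}
  (hφ : ∀ ε > (0 : ℝ), TendstoUniformlyOn (dirichletPartialSum c) φ atTop {s : ℂ | ε < s.re})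
include hφ

lemma tendsto_dirichletPartialSum_of_tendstoUniformlyOn {s : ℂ} (hs : 0 < s.re) :
    Tendsto (fun N => dirichletPartialSum c N s) atTop (𝓝 (φ s)) :=
  (hφ (s.re / 2) (by linarith)).tendsto_at (show s.re / 2 < s.re by linarith)

lemma differentiableOn_of_tendstoUniformlyOn {ε : ℝ} (hε : 0 < ε) :
    DifferentiableOn ℂ φ {s : ℂ | ε < s.re} := by
  refine (hφ ε hε).tendstoLocallyUniformlyOn.differentiableOn (.of_forall fun N => ?_)
    (isOpen_lt continuous_const continuous_re)
  refine (Differentiable.fun_sum fun n _ => ?_).differentiableOn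
  exact (differentiable_neg.const_cpow (.inl (by exact_mod_cast n.succ_ne_zero))).const_mul _

lemma exists_add_le_re_of_lt_re_const {a : ℝ} (hge : ∀ s : ℂ, 0 < s.re → a ≤ (φ s).re)
    (ha : a < (c 0).re) : ∃ δ > (0 : ℝ), ∀ s : ℂ, 1 / 4 ≤ s.re → a + δ ≤ (φ s).re := by
  set θ := (c 0).re - a
  have hθ : 0 < θ := sub_pos.2 ha
  obtain ⟨σ₀, hσ₀⟩ := exists_norm_sub_const_lt
    (fun s hs => tendsto_dirichletPartialSum_of_tendstoUniformlyOn hφ hs) (half_pos hθ)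
  set u := max σ₀ 1
  have hu : 1 ≤ u := le_max_right σ₀ 1
  have hright (s : ℂ) (hs : u ≤ s.re) : a + θ / 2 ≤ (φ s).re := by
    have := (abs_re_le_norm _).trans (hσ₀ s ((le_max_left _ _).trans hs)).le
    rw [sub_re] at this
    linarith [neg_abs_le ((φ s).re - (c 0).re)]
  have hlu : (1 / 8 : ℝ) < u := by linarith
  have hdiff : DiffContOnCl ℂ φ (HadamardThreeLines.verticalStrip (1 / 8) u) := by
    refine ((differentiableOn_of_tendstoUniformlyOn hφ (ε := 1 / 16) (by norm_num)).mono
      fun z hz => ?_).diffContOnCl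
    rw [HadamardThreeLines.verticalStrip, closure_preimage_re, closure_Ioo hlu.ne] at hz
    show 1 / 16 < z.re
    linarith [hz.1]
  have hfrac_le : (1 / 4 - 1 / 8) / (u - 1 / 8) ≤ 1 := by rw [div_le_one] <;> linarith
  refine ⟨θ / 2 * ((1 / 4 - 1 / 8) / (u - 1 / 8)), by positivity, fun s hs => ?_⟩
  rcases le_or_gt u s.re with hsu | hsu
  · nlinarith [hright s hsu]
  · calc a + θ / 2 * ((1 / 4 - 1 / 8) / (u - 1 / 8))
        ≤ a + θ / 2 * ((s.re - 1 / 8) / (u - 1 / 8)) := by gcongr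
      _ ≤ (φ s).re := le_re_of_mem_verticalClosedStrip hlu hdiff
          (fun z hz => hge z (by linarith [hz.1])) (fun z hz => hright z hz.ge)
          ⟨by linarith, hsu.le⟩

end UniformConvergence

/-- Bayart's lemma: a symbol which is not a vertical translation maps some half-plane
`ℂ_{1/2-ε}` into `ℂ_{1/2+η}`. -/
theorem symbol_not_translation_maps_strictly
    (c₀ : ℕ) (c : ℕ → ℂ) (φ Φ : ℂ → ℂ)
    (hφ : ∀ ε > (0:ℝ), TendstoUniformlyOn
      (fun N s => ∑ n ∈ Finset.range N, c n * ((n:ℂ)+1) ^ (-s)) φ atTop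
      {s : ℂ | ε < s.re})
    (hΦ : ∀ s : ℂ, Φ s = (c₀ : ℂ) * s + φ s)
    (hpos : 1 ≤ c₀ → ∀ s : ℂ, 0 < s.re → 0 ≤ (φ s).re)
    (hzero : c₀ = 0 → ∀ s : ℂ, 0 < s.re → 1/2 < (Φ s).re)
    (hnt : ¬ ∃ τ : ℝ, ∀ s : ℂ, 0 < s.re → Φ s = s + (τ : ℂ) * Complex.I) :
    ∃ ε > (0:ℝ), ∃ η > (0:ℝ), ∀ s : ℂ, 1/2 - ε < s.re → 1/2 + η < (Φ s).re := by
  have hconv (s : ℂ) (hs : 0 < s.re) := tendsto_dirichletPartialSum_of_tendstoUniformlyOn hφ hs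
  have hΦre (s : ℂ) : (Φ s).re = c₀ * s.re + (φ s).re := by simp [hΦ]
  obtain hc₀ | hc₀ := le_or_gt 2 c₀
  · refine ⟨1 / 8, by norm_num, 1 / 8, by norm_num, fun s hs => ?_⟩
    have h2 : (2 : ℝ) ≤ c₀ := by exact_mod_cast hc₀
    nlinarith [hΦre s, hpos (by omega) s (by linarith)]
  interval_cases c₀ <;> norm_num at hΦre
  · have hge (s : ℂ) (hs : 0 < s.re) : 1 / 2 < (φ s).re := by simpa [hΦre] using hzero rfl s hs
    have ha : 1 / 2 < (c 0).re := by
      refine (re_const_gt_or_eq_const hconv fun s hs => (hge s hs).le).elim id fun h => ?_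
      simpa [h 1 one_pos] using hge 1 one_pos
    obtain ⟨δ, hδ, hφδ⟩ := exists_add_le_re_of_lt_re_const hφ (fun s hs => (hge s hs).le) ha
    exact ⟨1 / 4, by norm_num, δ / 2, by positivity,
      fun s hs => by linarith [hΦre s, hφδ s (by linarith)]⟩
  · have hge := hpos le_rfl
    have ha : 0 < (c 0).re := by
      refine (re_const_gt_or_eq_const hconv hge).elim id fun h => ?_
      refine lt_of_le_of_ne (by simpa [h 1 one_pos] using hge 1 one_pos) fun h0 => hnt ?_
      refine ⟨(c 0).im, fun s hs => ?_⟩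
      rw [hΦ, h s hs]
      apply Complex.ext <;> simp [← h0]
    obtain ⟨δ, hδ, hφδ⟩ := exists_add_le_re_of_lt_re_const hφ hge ha
    set ε := min (δ / 2) (1 / 4)
    refine ⟨ε, by positivity, ε / 2, by positivity, fun s hs => ?_⟩
    have hε : ε ≤ δ / 2 ∧ ε ≤ 1 / 4 := ⟨min_le_left _ _, min_le_right _ _⟩
    linarith [hΦre s, hφδ s (by linarith)]
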